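/- Let F be a field and L₁, L₂ finite extensions of F inside an algebraic closure, with coprime degrees d₁ = [L₁:F], d₂ = [L₂:F], and let L = L₁L₂ be their compositum. If λ ∈ F* satisfies λ ∈ N_{L₁/F}(L₁*) and λ ∈ N_{L₂/F}(L₂*), then λ ∈ N_{L/F}(L*). -/
import Mathlib
set_option maxHeartbeats 1000000
set_option synthInstance.maxHeartbeats 400000

open Module

/-- Norm of an element of an intermediate field, taken in a finite extension:
it is the norm in the smaller field raised to the relative degree. -/
theorem norm_algebraMap_pow_aux {F K L : Type*} [Field F] [Field K] [Field L]
    [Algebra F K] [Algebra K L] [Algebra F L] [IsScalarTower F K L]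
    [FiniteDimensional F K] [FiniteDimensional K L] (x : K) :
    Algebra.norm F (algebraMap K L x) = Algebra.norm F x ^ Module.finrank K L := by
  let b := Module.finBasis F K
  let c := Module.finBasis K L
  rw [Algebra.norm_eq_matrix_det (b.smulTower c), Algebra.smulTower_leftMulMatrix_algebraMap,
    Matrix.det_blockDiagonal, Algebra.norm_eq_matrix_det b]
  rw [Finset.prod_const, Finset.card_univ, Fintype.card_fin, Module.finrank_eq_card_basis c]

/-- If `λ` is a norm from two finite extensions of coprime degrees inside an algebraic
closure, then it is a norm from their compositum. -/
theorem stmt2 {F : Type*} [Field F]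
    (L₁ L₂ : IntermediateField F (AlgebraicClosure F))
    [FiniteDimensional F L₁] [FiniteDimensional F L₂]
    (hcop : Nat.Coprime (Module.finrank F L₁) (Module.finrank F L₂))
    (lam : F) (hlam : lam ≠ 0)
    (h1 : ∃ x : L₁, Algebra.norm F x = lam)
    (h2 : ∃ x : L₂, Algebra.norm F x = lam) :
    ∃ x : ↥(L₁ ⊔ L₂), Algebra.norm F x = lam := by
  classical
  set L := L₁ ⊔ L₂ with hL
  have hle1 : L₁ ≤ L := le_sup_left
  have hle2 : L₂ ≤ L := le_sup_right
  haveI : FiniteDimensional F ↥L := IntermediateField.finiteDimensional_sup L₁ L₂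
  set d₁ := Module.finrank F L₁
  set d₂ := Module.finrank F L₂
  -- degree of the compositum
  have hdisj : L₁.LinearDisjoint L₂ := IntermediateField.LinearDisjoint.of_finrank_coprime hcop
  have hrank : Module.finrank F ↥L = d₁ * d₂ := hdisj.finrank_sup
  -- set up towers F ⊆ Lᵢ ⊆ L
  letI : Algebra ↥L₁ ↥L := (IntermediateField.inclusion hle1).toRingHom.toAlgebra
  letI : Algebra ↥L₂ ↥L := (IntermediateField.inclusion hle2).toRingHom.toAlgebra
  haveI : IsScalarTower F ↥L₁ ↥L := IsScalarTower.of_algebraMap_eq' rfl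
  haveI : IsScalarTower F ↥L₂ ↥L := IsScalarTower.of_algebraMap_eq' rfl
  haveI : FiniteDimensional ↥L₁ ↥L := FiniteDimensional.right F ↥L₁ ↥L
  haveI : FiniteDimensional ↥L₂ ↥L := FiniteDimensional.right F ↥L₂ ↥L
  have hd₁ : 0 < d₁ := Module.finrank_pos
  have hd₂ : 0 < d₂ := Module.finrank_pos
  have hfr1 : Module.finrank ↥L₁ ↥L = d₂ := by
    have := Module.finrank_mul_finrank F ↥L₁ ↥L
    rw [hrank] at this
    exact Nat.eq_of_mul_eq_mul_left hd₁ this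
  have hfr2 : Module.finrank ↥L₂ ↥L = d₁ := by
    have := Module.finrank_mul_finrank F ↥L₂ ↥L
    rw [hrank, mul_comm d₁ d₂] at this
    exact Nat.eq_of_mul_eq_mul_left hd₂ this
  obtain ⟨x₁, hx₁⟩ := h1
  obtain ⟨x₂, hx₂⟩ := h2
  have hx₁0 : x₁ ≠ 0 := by
    intro h; apply hlam; rw [← hx₁, h, Algebra.norm_zero]
  have hx₂0 : x₂ ≠ 0 := by
    intro h; apply hlam; rw [← hx₂, h, Algebra.norm_zero]
  -- images in L
  set y₁ : ↥L := algebraMap ↥L₁ ↥L x₁ with hy₁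
  set y₂ : ↥L := algebraMap ↥L₂ ↥L x₂ with hy₂
  have hy₁0 : y₁ ≠ 0 := by simpa [hy₁] using hx₁0
  have hy₂0 : y₂ ≠ 0 := by simpa [hy₂] using hx₂0
  have hn₁ : Algebra.norm F y₁ = lam ^ d₂ := by
    rw [hy₁, norm_algebraMap_pow_aux, hx₁, hfr1]
  have hn₂ : Algebra.norm F y₂ = lam ^ d₁ := by
    rw [hy₂, norm_algebraMap_pow_aux, hx₂, hfr2]
  -- work with units
  obtain ⟨a, b, hab⟩ := (Nat.isCoprime_iff_coprime.mpr hcop : IsCoprime (d₁ : ℤ) (d₂ : ℤ))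
  set u₁ : (↥L)ˣ := Units.mk0 y₁ hy₁0
  set u₂ : (↥L)ˣ := Units.mk0 y₂ hy₂0
  set lamu : Fˣ := Units.mk0 lam hlam
  set n : (↥L)ˣ →* Fˣ := Units.map (Algebra.norm F : ↥L →* F)
  have hnu₁ : n u₁ = lamu ^ d₂ := by
    ext
    simpa [n, u₁, lamu] using hn₁
  have hnu₂ : n u₂ = lamu ^ d₁ := by
    ext
    simpa [n, u₂, lamu] using hn₂
  refine ⟨((u₂ ^ a * u₁ ^ b : (↥L)ˣ) : ↥L), ?_⟩
  have : n (u₂ ^ a * u₁ ^ b) = lamu := by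
    rw [map_mul, map_zpow, map_zpow, hnu₁, hnu₂, ← zpow_natCast lamu d₁,
      ← zpow_natCast lamu d₂, ← zpow_mul, ← zpow_mul, ← zpow_add,
      mul_comm (d₁ : ℤ) a, mul_comm (d₂ : ℤ) b, hab, zpow_one]
  have h' := congrArg Units.val this
  rw [Units.coe_map] at h'
  exact h'
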